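/- Let U be a nonempty convex subset of a separated locally convex space X and x ∈ X. Then x ∈ qi(U) if and only if x ∈ qri(U) and 0 ∈ qi(U - U). -/

import Mathlib

open Set Pointwise Topology

/-- The conic hull: cone(S) = ⋃_{t ≥ 0} t • S. -/
def coneHull {E : Type*} [AddCommGroup E] [Module ℝ E] (S : Set E) : Set E :=
  {x | ∃ t : ℝ, 0 ≤ t ∧ ∃ s ∈ S, x = t • s}

/-- The quasi-relative interior. -/
def qri {E : Type*} [AddCommGroup E] [Module ℝ E] [TopologicalSpace E] (U : Set E) : Set E :=
  {x | x ∈ U ∧ ∃ M : Submodule ℝ E, closure (coneHull (U - {x})) = (M : Set E)}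

/-- The quasi interior. -/
def qi {E : Type*} [AddCommGroup E] [Module ℝ E] [TopologicalSpace E] (U : Set E) : Set E :=
  {x | x ∈ U ∧ closure (coneHull (U - {x})) = Set.univ}

/-- The algebraic interior (core). -/
def algCore {E : Type*} [AddCommGroup E] [Module ℝ E] (U : Set E) : Set E :=
  {x | x ∈ U ∧ coneHull (U - {x}) = Set.univ}

/-- The relative algebraic interior (intrinsic core). -/
def icr {E : Type*} [AddCommGroup E] [Module ℝ E] (U : Set E) : Set E :=
  {x | x ∈ U ∧ ∃ M : Submodule ℝ E, coneHull (U - {x}) = (M : Set E)}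

/-- The strong quasi-relative interior. -/
def sqri {E : Type*} [AddCommGroup E] [Module ℝ E] [TopologicalSpace E] (U : Set E) : Set E :=
  {x | x ∈ U ∧ ∃ M : Submodule ℝ E, coneHull (U - {x}) = (M : Set E) ∧ IsClosed (M : Set E)}

/-- The normal cone of U at x. -/
def normalCone {E : Type*} [AddCommGroup E] [Module ℝ E] [TopologicalSpace E]
    (U : Set E) (x : E) : Set (E →L[ℝ] ℝ) :=
  {f | ∀ y ∈ U, f (y - x) ≤ 0}

section ConeHull

variable {E : Type*} [AddCommGroup E] [Module ℝ E]

theorem subset_coneHull (S : Set E) : S ⊆ coneHull S :=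
  fun s hs => ⟨1, zero_le_one, s, hs, (one_smul ℝ s).symm⟩

theorem coneHull_mono {S T : Set E} (h : S ⊆ T) : coneHull S ⊆ coneHull T := by
  rintro _ ⟨t, ht, s, hs, rfl⟩
  exact ⟨t, ht, s, h hs, rfl⟩

theorem coneHull_subset_submodule {S : Set E} {M : Submodule ℝ E} (h : S ⊆ M) :
    coneHull S ⊆ M := by
  rintro _ ⟨t, -, s, hs, rfl⟩
  exact M.smul_mem t (h hs)

theorem sub_subset_submodule_of_sub_singleton_subset {U : Set E} {x : E} {M : Submodule ℝ E}
    (h : U - {x} ⊆ M) : U - U ⊆ M := by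
  rintro _ ⟨u, hu, v, hv, rfl⟩
  have hux : u - x ∈ M := h (sub_mem_sub hu rfl)
  have hvx : v - x ∈ M := h (sub_mem_sub hv rfl)
  simpa using M.sub_mem hux hvx

end ConeHull

theorem qi_iff_qri_and_qi_sub_general
    {X : Type*} [AddCommGroup X] [Module ℝ X] [TopologicalSpace X]
    (U : Set X) (x : X) :
    x ∈ qi U ↔ x ∈ qri U ∧ (0 : X) ∈ qi (U - U) := by
  have hUU : U - U - {(0 : X)} = U - U := by simp
  simp only [qi, qri, hUU, mem_ofPred_eq]
  constructor
  · rintro ⟨hxU, hcl⟩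
    refine ⟨⟨hxU, ⊤, by simpa using hcl⟩, by simpa using sub_mem_sub hxU hxU, ?_⟩
    refine eq_univ_of_univ_subset (hcl ▸ closure_mono (coneHull_mono ?_))
    exact sub_subset_sub_left (singleton_subset_iff.2 hxU)
  · rintro ⟨⟨hxU, M, hM⟩, -, hcl⟩
    refine ⟨hxU, hM.trans (eq_univ_of_univ_subset ?_)⟩
    have hMc : IsClosed (M : Set X) := hM ▸ isClosed_closure
    have hxM : U - {x} ⊆ M :=
      (subset_coneHull _).trans (hM ▸ subset_closure)
    calc univ = closure (coneHull (U - U)) := hcl.symm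
      _ ⊆ M := closure_minimal
        (coneHull_subset_submodule (sub_subset_submodule_of_sub_singleton_subset hxM)) hMc

theorem qi_iff_qri_and_qi_sub
    {X : Type*} [AddCommGroup X] [Module ℝ X] [TopologicalSpace X]
    [IsTopologicalAddGroup X] [ContinuousSMul ℝ X] [LocallyConvexSpace ℝ X] [T2Space X]
    (U : Set X) (hne : U.Nonempty) (hconv : Convex ℝ U) (x : X) :
    x ∈ qi U ↔ x ∈ qri U ∧ (0 : X) ∈ qi (U - U) :=
  qi_iff_qri_and_qi_sub_general U x
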